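/- Let ⟨G, h, g⟩ and ⟨G', h', g'⟩ be two hat guessing games with V(G) ∩ V(G') = {v}, and suppose both are winning. Then the product game on G ∪ G' is winning, where the hatness and guessing functions agree with h, g on V(G)\{v}, with h', g' on V(G')\{v}, and at v equal h(v)·h'(v) and g(v)·g'(v) respectively. -/
import Mathlib


/-- A winning strategy in the hat guessing game `⟨G, h, g⟩`: each sage `v` deterministically
outputs at most `g v` guesses depending only on the hat colors of its neighbors, and for
every hat assignment (with `c v < h v`) some sage's guess set contains its own color. -/
def HatWinning {V : Type*} (G : SimpleGraph V) (h g : V → ℕ) : Prop :=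
  ∃ σ : V → (V → ℕ) → Finset ℕ,
    (∀ v c c', (∀ u, G.Adj v u → c u = c' u) → σ v c = σ v c') ∧
    (∀ v c, (σ v c).card ≤ g v) ∧
    ∀ c : V → ℕ, (∀ v, c v < h v) → ∃ v, c v ∈ σ v c

/-- The hat guessing game played by the sages occupying the vertices of `S` only
(the game on the induced subgraph `G[S]`). -/
def HatWinningOn {V : Type*} (G : SimpleGraph V) (S : Set V) (h g : V → ℕ) : Prop :=
  ∃ σ : V → (V → ℕ) → Finset ℕ,
    (∀ v ∈ S, ∀ c c', (∀ u ∈ S, G.Adj v u → c u = c' u) → σ v c = σ v c') ∧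
    (∀ v ∈ S, ∀ c, (σ v c).card ≤ g v) ∧
    ∀ c : V → ℕ, (∀ v ∈ S, c v < h v) → ∃ v ∈ S, c v ∈ σ v c

/-- The product of two winning games with respect to a common vertex `v`
is winning: here `G` has all its edges inside `S`, `G'` inside `S'`, `S ∩ S' = {v}`,
`S ∪ S' = V`, and the new hatness/guessing functions `ht, gt` agree with `h, g` on `S \ {v}`,
with `h', g'` on `S' \ {v}`, and equal the products at `v`. -/
theorem product_of_winning_games {V : Type*} (G G' : SimpleGraph V) (S S' : Set V) (v : V)
    (hGS : ∀ x y, G.Adj x y → x ∈ S ∧ y ∈ S)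
    (hGS' : ∀ x y, G'.Adj x y → x ∈ S' ∧ y ∈ S')
    (hcap : S ∩ S' = {v}) (hcup : S ∪ S' = Set.univ)
    (h g h' g' ht gt : V → ℕ)
    (hwin : HatWinningOn G S h g) (hwin' : HatWinningOn G' S' h' g')
    (hagree : ∀ x ∈ S, x ≠ v → ht x = h x ∧ gt x = g x)
    (hagree' : ∀ x ∈ S', x ≠ v → ht x = h' x ∧ gt x = g' x)
    (hhv : ht v = h v * h' v) (hgv : gt v = g v * g' v) :
    HatWinning (G ⊔ G') ht gt := by

  classical
  obtain ⟨σ, hdet, hcard, hw⟩ := hwin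
  obtain ⟨σ', hdet', hcard', hw'⟩ := hwin'
  have hvS : v ∈ S := by
    have : v ∈ S ∩ S' := by rw [hcap]; rfl
    exact this.1
  have hvS' : v ∈ S' := by
    have : v ∈ S ∩ S' := by rw [hcap]; rfl
    exact this.2
  by_cases hz : h v * h' v = 0
  · refine ⟨fun _ _ => ∅, fun _ _ _ _ => rfl, fun _ _ => by simp, fun c hc => ?_⟩
    have := hc v
    rw [hhv, hz] at this
    omega
  have hv0 : 0 < h v := Nat.pos_of_ne_zero fun e => hz (by simp [e])
  have hv0' : 0 < h' v := Nat.pos_of_ne_zero fun e => hz (by simp [e])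
  set dS : (V → ℕ) → (V → ℕ) := fun c => Function.update c v (c v % h v) with hdS
  set dS' : (V → ℕ) → (V → ℕ) := fun c => Function.update c v (c v / h v) with hdS'
  have key : ∀ x ∈ S, ∀ c c', (∀ u, (G ⊔ G').Adj x u → c u = c' u) →
      σ x (dS c) = σ x (dS c') := by
    intro x hx c c' hcc
    apply hdet x hx
    intro u hu hadj
    have hcu : c u = c' u := hcc u (by simp [hadj])
    by_cases huv : u = v
    · rw [huv] at hcu ⊢
      simp [hdS, hcu]
    · simp [hdS, Function.update_of_ne huv, hcu]
  have key' : ∀ x ∈ S', ∀ c c', (∀ u, (G ⊔ G').Adj x u → c u = c' u) →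
      σ' x (dS' c) = σ' x (dS' c') := by
    intro x hx c c' hcc
    apply hdet' x hx
    intro u hu hadj
    have hcu : c u = c' u := hcc u (by simp [hadj])
    by_cases huv : u = v
    · rw [huv] at hcu ⊢
      simp [hdS', hcu]
    · simp [hdS', Function.update_of_ne huv, hcu]
  refine ⟨fun x c => if x = v then
      ((σ v (dS c)) ×ˢ (σ' v (dS' c))).image (fun p => p.1 + h v * p.2)
    else if x ∈ S then σ x (dS c) else σ' x (dS' c), ?_, ?_, ?_⟩
  · intro x c c' hcc
    by_cases hxv : x = v
    · rw [hxv] at hcc ⊢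
      simp only [if_pos rfl]
      rw [key v hvS c c' hcc, key' v hvS' c c' hcc]
    · simp only [if_neg hxv]
      by_cases hxS : x ∈ S
      · simp only [if_pos hxS]
        exact key x hxS c c' hcc
      · simp only [if_neg hxS]
        have hxS' : x ∈ S' := by
          have : x ∈ S ∪ S' := by rw [hcup]; trivial
          exact this.resolve_left hxS
        exact key' x hxS' c c' hcc
  · intro x c
    by_cases hxv : x = v
    · rw [hxv]
      simp only [if_pos rfl]
      calc (((σ v (dS c)) ×ˢ (σ' v (dS' c))).image (fun p => p.1 + h v * p.2)).card
          ≤ ((σ v (dS c)) ×ˢ (σ' v (dS' c))).card := Finset.card_image_le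
        _ = (σ v (dS c)).card * (σ' v (dS' c)).card := Finset.card_product _ _
        _ ≤ g v * g' v := Nat.mul_le_mul (hcard v hvS _) (hcard' v hvS' _)
        _ = gt v := hgv.symm
    · simp only [if_neg hxv]
      by_cases hxS : x ∈ S
      · simp only [if_pos hxS]
        rw [(hagree x hxS hxv).2]
        exact hcard x hxS _
      · simp only [if_neg hxS]
        have hxS' : x ∈ S' := by
          have : x ∈ S ∪ S' := by rw [hcup]; trivial
          exact this.resolve_left hxS
        rw [(hagree' x hxS' hxv).2]
        exact hcard' x hxS' _
  · intro c hc
    have hbS : ∀ u ∈ S, dS c u < h u := by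
      intro u hu
      by_cases huv : u = v
      · rw [huv]
        simp only [hdS, Function.update_self]
        exact Nat.mod_lt _ hv0
      · simp only [hdS, Function.update_of_ne huv]
        have := hc u
        rwa [(hagree u hu huv).1] at this
    have hbS' : ∀ u ∈ S', dS' c u < h' u := by
      intro u hu
      by_cases huv : u = v
      · rw [huv]
        simp only [hdS', Function.update_self]
        rw [Nat.div_lt_iff_lt_mul hv0, mul_comm]
        have := hc v
        rwa [hhv] at this
      · simp only [hdS', Function.update_of_ne huv]
        have := hc u
        rwa [(hagree' u hu huv).1] at this
    obtain ⟨x, hxS, hxm⟩ := hw (dS c) hbS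
    obtain ⟨x', hxS', hxm'⟩ := hw' (dS' c) hbS'
    by_cases hxv : x = v
    · by_cases hxv' : x' = v
      · rw [hxv] at hxm; rw [hxv'] at hxm'
        refine ⟨v, ?_⟩
        simp only [if_pos rfl]
        apply Finset.mem_image.2
        refine ⟨(c v % h v, c v / h v), Finset.mem_product.2 ⟨?_, ?_⟩, Nat.mod_add_div _ _⟩
        · have : dS c v = c v % h v := by simp [hdS]
          rwa [this] at hxm
        · have : dS' c v = c v / h v := by simp [hdS']
          rwa [this] at hxm'
      · have hx'S : x' ∉ S := by
          intro hm
          have : x' ∈ S ∩ S' := ⟨hm, hxS'⟩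
          rw [hcap] at this
          exact hxv' this
        refine ⟨x', ?_⟩
        simp only [if_neg hxv', if_neg hx'S]
        have : dS' c x' = c x' := by simp [hdS', Function.update_of_ne hxv']
        rwa [this] at hxm'
    · refine ⟨x, ?_⟩
      simp only [if_neg hxv, if_pos hxS]
      have : dS c x = c x := by simp [hdS, Function.update_of_ne hxv]
      rwa [this] at hxm
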